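/- For every U in the special unitary group SU(2) there exists Q in the special orthogonal group SO(3) such that for every qubit density matrix ρ, the Bloch vector of UρU† equals Q applied to the Bloch vector of ρ; that is, Tr(UρU†·σ_i) = Σ_j Q_{ij} Tr(ρ·σ_j) for i = 1,2,3. -/
import Mathlib


open Matrix Complex BigOperators
open scoped ComplexOrder

/-- The three Pauli matrices σ₁, σ₂, σ₃ (indexed by `Fin 3`). -/
noncomputable def pauli : Fin 3 → Matrix (Fin 2) (Fin 2) ℂ
  | 0 => !![0, 1; 1, 0]
  | 1 => !![0, -Complex.I; Complex.I, 0]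
  | 2 => !![1, 0; 0, -1]

/-- Membership in SU(2): unitary 2×2 complex matrix of determinant 1. -/
def IsSU2 (U : Matrix (Fin 2) (Fin 2) ℂ) : Prop := Uᴴ * U = 1 ∧ U.det = 1

/-- Membership in SO(3): orthogonal 3×3 real matrix of determinant 1. -/
def IsSO3 (Q : Matrix (Fin 3) (Fin 3) ℝ) : Prop := Qᵀ * Q = 1 ∧ Q.det = 1

/-- The rotation matrix induced by the SU(2) element `!![a, b; -conj b, conj a]`. -/
noncomputable def rotQ (a b : ℂ) : Matrix (Fin 3) (Fin 3) ℝ :=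
  !![a.re*a.re-a.im*a.im-b.re*b.re+b.im*b.im,
     2*a.re*a.im+2*b.re*b.im,
     2*a.im*b.im-2*a.re*b.re;
     -2*a.re*a.im+2*b.re*b.im,
     a.re*a.re-a.im*a.im+b.re*b.re-b.im*b.im,
     2*a.im*b.re+2*a.re*b.im;
     2*a.re*b.re+2*a.im*b.im,
     2*a.im*b.re-2*a.re*b.im,
     a.re*a.re+a.im*a.im-b.re*b.re-b.im*b.im]

set_option maxHeartbeats 1000000 in
lemma rotQ_key (a b : ℂ) (i : Fin 3) :
    (!![a, b; -(starRingEnd ℂ) b, (starRingEnd ℂ) a])ᴴ * pauli i *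
      !![a, b; -(starRingEnd ℂ) b, (starRingEnd ℂ) a] = ∑ j, (rotQ a b i j : ℂ) • pauli j := by
  fin_cases i <;>
  · ext x y
    fin_cases x <;> fin_cases y <;>
    · simp [pauli, rotQ, Matrix.mul_apply, Fin.sum_univ_two, Fin.sum_univ_three,
        Matrix.conjTranspose_apply, Matrix.sum_apply]
      apply Complex.ext <;>
      · simp only [Complex.add_re, Complex.mul_re, Complex.mul_im, Complex.add_im, Complex.neg_re,
          Complex.neg_im, Complex.I_re, Complex.I_im, Complex.conj_re, Complex.conj_im,
          Complex.sub_re, Complex.sub_im, Complex.ofReal_re, Complex.ofReal_im,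
          Complex.one_re, Complex.one_im, Complex.zero_re, Complex.zero_im,
          Complex.re_ofNat, Complex.im_ofNat]
        ring

set_option maxHeartbeats 1000000 in
lemma rotQ_orth (a b : ℂ) (h : a.re*a.re + a.im*a.im + b.re*b.re + b.im*b.im = 1) :
    (rotQ a b)ᵀ * rotQ a b = 1 := by
  ext i j
  fin_cases i <;> fin_cases j <;>
  · simp only [Matrix.mul_apply, Matrix.transpose_apply, Fin.sum_univ_three, Matrix.one_apply]
    simp [rotQ]
    nlinarith [h, sq_nonneg a.re, sq_nonneg a.im]

set_option maxHeartbeats 1000000 in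
lemma rotQ_det (a b : ℂ) (h : a.re*a.re + a.im*a.im + b.re*b.re + b.im*b.im = 1) :
    (rotQ a b).det = 1 := by
  have hd : (rotQ a b).det =
      (a.re*a.re + a.im*a.im + b.re*b.re + b.im*b.im)^3 := by
    simp [rotQ, Matrix.det_fin_three]
    ring
  rw [hd, h]; norm_num

/-- For every U ∈ SU(2) there exists Q ∈ SO(3) such that for every qubit
density matrix ρ, the Bloch vector of UρU† is Q applied to the Bloch vector of ρ. -/
theorem su2_induces_so3_on_bloch (U : Matrix (Fin 2) (Fin 2) ℂ) (hU : IsSU2 U) :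
    ∃ Q : Matrix (Fin 3) (Fin 3) ℝ, IsSO3 Q ∧
      ∀ ρ : Matrix (Fin 2) (Fin 2) ℂ, ρ.PosSemidef → ρ.trace = 1 →
        ∀ i, ((U * ρ * Uᴴ * pauli i).trace).re =
          ∑ j, Q i j * ((ρ * pauli j).trace).re := by
  obtain ⟨h1, h2⟩ := hU
  have hUinv : U⁻¹ = Uᴴ := Matrix.inv_eq_left_inv h1
  have hadj : U⁻¹ = U.adjugate := by rw [Matrix.inv_def, h2]; simp
  have key : Uᴴ = U.adjugate := hUinv.symm.trans hadj
  have hd : U 1 1 = (starRingEnd ℂ) (U 0 0) := by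
    have := congrFun (congrFun key 0) 0
    simp [Matrix.adjugate_fin_two, Matrix.conjTranspose_apply] at this
    exact this.symm
  have hc : U 1 0 = -(starRingEnd ℂ) (U 0 1) := by
    have := congrFun (congrFun key 0) 1
    simp [Matrix.adjugate_fin_two, Matrix.conjTranspose_apply] at this
    have := congrArg (starRingEnd ℂ) this
    simpa using this
  set a := U 0 0 with ha
  set b := U 0 1 with hb
  have hUform : U = !![a, b; -(starRingEnd ℂ) b, (starRingEnd ℂ) a] := by
    ext x y
    fin_cases x <;> fin_cases y <;> simp [ha, hb, hd, hc]
  have hn : a.re*a.re + a.im*a.im + b.re*b.re + b.im*b.im = 1 := by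
    rw [Matrix.det_fin_two, hd, hc] at h2
    have := congrArg Complex.re h2
    simp [Complex.mul_re, Complex.sub_re] at this
    nlinarith [this]
  refine ⟨rotQ a b, ⟨rotQ_orth a b hn, rotQ_det a b hn⟩, ?_⟩
  intro ρ _ _ i
  have hcyc : (U * ρ * Uᴴ * pauli i).trace = ((Uᴴ * pauli i * U) * ρ).trace := by
    rw [Matrix.trace_mul_cycle (U * ρ) Uᴴ (pauli i),
      Matrix.trace_mul_cycle (pauli i) (U * ρ) Uᴴ, Matrix.mul_assoc]
    simp [Matrix.mul_assoc]
  rw [hcyc, hUform, rotQ_key a b i]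
  rw [Matrix.sum_mul, Matrix.trace_sum, Complex.re_sum]
  refine Finset.sum_congr rfl fun j _ => ?_
  rw [Matrix.smul_mul, Matrix.trace_smul, Matrix.trace_mul_comm]
  simp [Complex.re_ofReal_mul]
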